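/- Let P = s⁵t − st⁵ ∈ ℂ[s,t]. Then the fourth transvectant of P with itself vanishes identically: Σ_{l=0}^{4} (−1)^l · C(4,l) · (∂_s^{4−l}∂_t^{l} P)·(∂_s^{l}∂_t^{4−l} P) = 0. (This is the vanishing of the spin 2 component among the quadratic polynomials in the spin 3 multiplet of projective coordinates for the octahedral quotient, which furnishes the quadratic relations.) -/

import Mathlib

open MvPolynomial Finset

/- Variables of `ℂ[s,t]`: `0 ↦ s`, `1 ↦ t`. -/

/-- The lowest-degree invariant of the binary tetrahedral group, `P = s⁵t − st⁵`. -/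
noncomputable def P : MvPolynomial (Fin 2) ℂ :=
  X 0 ^ 5 * X 1 - X 0 * X 1 ^ 5

/-- `∂_s` as a function on `ℂ[s,t]`. -/
noncomputable def Ds (f : MvPolynomial (Fin 2) ℂ) : MvPolynomial (Fin 2) ℂ := pderiv 0 f

/-- `∂_t` as a function on `ℂ[s,t]`. -/
noncomputable def Dt (f : MvPolynomial (Fin 2) ℂ) : MvPolynomial (Fin 2) ℂ := pderiv 1 f

/-! `∂_s^a ∂_t^b (s^m t^n) = m(m-1)⋯(m-a+1) · n(n-1)⋯(n-b+1) · s^(m-a) t^(n-b)`, so every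
derivative of `P` is explicit. Those of order four are `∂_s⁴P = 120st`, `∂_s³∂_tP = 60s²`,
`∂_s²∂_t²P = 0`, `∂_s∂_t³P = -60t²`, `∂_t⁴P = -120st`, and the five terms of the transvectant
are `-14400, 14400, 0, 14400, -14400` times `s²t²`. -/

namespace MvPolynomial

theorem iterate_pderiv_X_pow_mul {R σ : Type*} [CommSemiring R] (i : σ) (m k : ℕ)
    {q : MvPolynomial σ R} (hq : pderiv i q = 0) :
    (pderiv i)^[k] (X i ^ m * q) =
      (m.descFactorial k : MvPolynomial σ R) * (X i ^ (m - k) * q) := by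
  induction k with
  | zero => simp
  | succ k ih =>
    rw [Function.iterate_succ_apply', ih, pderiv_mul, pderiv_mul, hq, pderiv_pow,
      pderiv_X_self, Derivation.map_natCast, Nat.descFactorial_succ, Nat.sub_sub]
    push_cast
    ring

end MvPolynomial

theorem iterate_Ds_iterate_Dt_X_pow_mul_X_pow (a b m n : ℕ) :
    Ds^[a] (Dt^[b] (X 0 ^ m * X 1 ^ n)) =
      ((m.descFactorial a * n.descFactorial b : ℕ) : MvPolynomial (Fin 2) ℂ) *
        (X 0 ^ (m - a) * X 1 ^ (n - b)) := by
  have hX0 : pderiv 1 (X 0 ^ m : MvPolynomial (Fin 2) ℂ) = 0 := by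
    simp [pderiv_X_of_ne (show (0 : Fin 2) ≠ 1 by decide)]
  have hX1 : pderiv 0 ((n.descFactorial b : MvPolynomial (Fin 2) ℂ) * X 1 ^ (n - b)) = 0 := by
    simp [pderiv_X_of_ne (show (1 : Fin 2) ≠ 0 by decide)]
  calc Ds^[a] (Dt^[b] (X 0 ^ m * X 1 ^ n))
      = (pderiv 0)^[a] ((pderiv 1)^[b] (X 1 ^ n * X 0 ^ m)) := by rw [mul_comm]; rfl
    _ = (pderiv 0)^[a] (X 0 ^ m * ((n.descFactorial b : MvPolynomial (Fin 2) ℂ) *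
          X 1 ^ (n - b))) := by rw [iterate_pderiv_X_pow_mul 1 n b hX0]; ring_nf
    _ = _ := by rw [iterate_pderiv_X_pow_mul 0 m a hX1]; push_cast; ring

theorem iterate_Ds_iterate_Dt_sub (a b : ℕ) (f g : MvPolynomial (Fin 2) ℂ) :
    Ds^[a] (Dt^[b] (f - g)) = Ds^[a] (Dt^[b] f) - Ds^[a] (Dt^[b] g) := by
  rw [show Dt^[b] (f - g) = Dt^[b] f - Dt^[b] g from
    iterate_map_sub (pderiv 1 : Derivation ℂ (MvPolynomial (Fin 2) ℂ) _) b f g]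
  exact iterate_map_sub (pderiv 0 : Derivation ℂ (MvPolynomial (Fin 2) ℂ) _) a _ _

theorem iterate_Ds_iterate_Dt_P (a b : ℕ) :
    Ds^[a] (Dt^[b] P) =
      ((Nat.descFactorial 5 a * Nat.descFactorial 1 b : ℕ) : MvPolynomial (Fin 2) ℂ) *
          (X 0 ^ (5 - a) * X 1 ^ (1 - b)) -
        ((Nat.descFactorial 1 a * Nat.descFactorial 5 b : ℕ) : MvPolynomial (Fin 2) ℂ) *
          (X 0 ^ (1 - a) * X 1 ^ (5 - b)) := by
  have hP : P = X 0 ^ 5 * X 1 ^ 1 - X 0 ^ 1 * X 1 ^ 5 := by rw [P, pow_one, pow_one]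
  rw [hP, iterate_Ds_iterate_Dt_sub, iterate_Ds_iterate_Dt_X_pow_mul_X_pow,
    iterate_Ds_iterate_Dt_X_pow_mul_X_pow]

/-- The fourth transvectant of `P` with itself (the spin 2 component of the quadratic
polynomials in the spin 3 multiplet) vanishes. -/
theorem fourth_transvectant_P_vanishes :
    ∑ l ∈ range 5,
        (-1 : MvPolynomial (Fin 2) ℂ) ^ l * (Nat.choose 4 l : MvPolynomial (Fin 2) ℂ) *
          (Ds^[4 - l] (Dt^[l] P)) * (Ds^[l] (Dt^[4 - l] P)) = 0 := by
  simp only [sum_range_succ, sum_range_zero, iterate_Ds_iterate_Dt_P]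
  norm_num [Nat.descFactorial]
  ring
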